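/- arXiv:2410.13780 — 5 statements merged into one kernel-verified Lean document; each statement's English description precedes it below -/
import Mathlib

section
/- Let Γ₁(R) = 2·2^{−2R} − 2^{−4R} and let R* > 0 satisfy 2^{2R*} = 1 + 4 ln(2) R*. Define Γ(R) = 1 − (1 − Γ₁(R*))·R/R* for 0 ≤ R < R* and Γ(R) = Γ₁(R) for R ≥ R*. Then Γ is convex on [0,∞) and Γ(R) ≤ Γ₁(R) for all R ≥ 0; in fact Γ is the largest convex function below Γ₁ on [0,∞) (the convex lower envelope of Γ₁). -/
/-!
Write `2^{-2R} = exp (-(c R))` with `c = 2 log 2`. The derivative of `Γ₁` is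
`2c (u² - u)` with `u = exp (-(c R))`, which increases once `u ≤ 1/2`; the equation for `R*` forces
`exp (-(c R*)) ≤ 1/2`, so `Γ₁` is convex on `[R*, ∞)`. The same equation says that the tangent
to `Γ₁` at `R*` passes through `(0, Γ₁ 0) = (0, 1)`, so `Γ` is `Γ₁` continued to the left of
`R*` by its tangent line, hence convex. On `[0, R*]`, `Γ₁` minus this tangent vanishes at both
ends and its derivative `2c (u - t)(u + t - 1)`, `t = exp (-(c R*))`, changes sign once, from
`+` to `-`; so `Γ ≤ Γ₁`. Finally a convex `g ≤ Γ₁` lies below its chord over `[0, R*]`,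
which lies below the chord of `Γ₁`, that is, below `Γ`.
-/

open Real Set

lemma convexOn_const_add_mul {s : Set ℝ} (hs : Convex ℝ s) (b k : ℝ) :
    ConvexOn ℝ s (fun x => b + k * x) :=
  ⟨hs, fun x _ y _ α β _ _ hαβ => le_of_eq (by
    simp only [smul_eq_mul]; linear_combination (-b) * hαβ)⟩

theorem ConvexOn.extend_Iio_tangent {f : ℝ → ℝ} {a m : ℝ} (hf : ConvexOn ℝ (Ici a) f)
    (hm : HasDerivWithinAt f m (Ici a) a) :
    ConvexOn ℝ univ (fun x => if x < a then f a + m * (x - a) else f x) := by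
  set h : ℝ → ℝ := fun x => f x - (f a + m * (x - a))
  have h_conv : ConvexOn ℝ (Ici a) h :=
    (hf.add (convexOn_const_add_mul (convex_Ici a) (m * a - f a) (-m))).congr fun x _ => by
      simp only [h, Pi.add_apply]; ring
  have h_mono : MonotoneOn h (Ici a) := by
    intro x (hx : a ≤ x) y (hy : a ≤ y) hxy
    have tangent_le_slope : ∀ z, a < z → m ≤ (f z - f a) / (z - a) := fun z hz =>
      (hf.le_slope_of_hasDerivWithinAt self_mem_Ici hz.le hz hm).trans_eq (slope_def_field f a z)
    obtain rfl | hxy := hxy.eq_or_lt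
    · exact le_rfl
    obtain rfl | hax := hx.eq_or_lt
    · have := tangent_le_slope y hxy
      rw [le_div_iff₀ (by linarith)] at this
      simp only [h]; linarith
    · have := (tangent_le_slope x hax).trans (hf.slope_mono_adjacent self_mem_Ici hy hax hxy)
      rw [le_div_iff₀ (by linarith)] at this
      simp only [h]; linarith
  refine ((convexOn_univ_piecewise_Iic_of_antitoneOn_Iic_monotoneOn_Ici
    (convexOn_const 0 (convex_Iic a)) h_conv antitoneOn_const h_mono (by simp [h])).add
    (convexOn_const_add_mul convex_univ (f a - m * a) m)).congr fun x _ => ?_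
  simp only [Pi.add_apply, piecewise, mem_Iic, h]
  rcases lt_trichotomy x a with hx | rfl | hx
  · simp only [hx, hx.le, if_true]; ring
  · simp
  · simp only [hx.not_gt, hx.not_ge, if_false]; ring

/-- `Γ₁` with `2^{-2R}` written as `exp (-(c R))`; the theorem has `c = 2 log 2`. -/
noncomputable def gamma₁ (c R : ℝ) : ℝ := 2 * exp (-(c * R)) - exp (-(c * R)) ^ 2

noncomputable def gamma₁' (c R : ℝ) : ℝ := 2 * c * (exp (-(c * R)) ^ 2 - exp (-(c * R)))

lemma hasDerivAt_exp_neg_mul (c R : ℝ) :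
    HasDerivAt (fun R => exp (-(c * R))) (-c * exp (-(c * R))) R := by
  simpa [mul_comm] using (((hasDerivAt_id R).const_mul c).neg).exp

lemma hasDerivAt_gamma₁ (c R : ℝ) : HasDerivAt (gamma₁ c) (gamma₁' c R) R := by
  refine (((hasDerivAt_exp_neg_mul c R).const_mul 2).fun_sub
    ((hasDerivAt_exp_neg_mul c R).fun_pow 2)).congr_deriv ?_
  simp only [gamma₁']; push_cast; ring

lemma gamma₁_two_mul_log_two (R : ℝ) :
    gamma₁ (2 * log 2) R = 2 * (2 : ℝ) ^ (-(2 * R)) - (2 : ℝ) ^ (-(4 * R)) := by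
  simp only [gamma₁, rpow_def_of_pos two_pos, ← exp_nat_mul (x := - _)]
  ring_nf

lemma exp_neg_mul_le_exp_neg_mul {c x y : ℝ} (hc : 0 ≤ c) (hxy : x ≤ y) :
    exp (-(c * y)) ≤ exp (-(c * x)) :=
  exp_le_exp.2 (neg_le_neg (mul_le_mul_of_nonneg_left hxy hc))

lemma gamma₁'_sub_gamma₁' (c x y : ℝ) :
    gamma₁' c x - gamma₁' c y =
      2 * c * (exp (-(c * x)) - exp (-(c * y))) * (exp (-(c * x)) + exp (-(c * y)) - 1) := by
  simp only [gamma₁']; ring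

lemma convexOn_gamma₁ {c R₀ : ℝ} (hc : 0 ≤ c) (hR₀ : exp (-(c * R₀)) ≤ 1 / 2) :
    ConvexOn ℝ (Ici R₀) (gamma₁ c) := by
  refine MonotoneOn.convexOn_of_deriv (convex_Ici R₀)
    (fun x _ => (hasDerivAt_gamma₁ c x).continuousAt.continuousWithinAt)
    (fun x _ => (hasDerivAt_gamma₁ c x).differentiableAt.differentiableWithinAt) ?_
  rw [interior_Ici]
  intro x (hx : R₀ < x) y (hy : R₀ < y) hxy
  rw [(hasDerivAt_gamma₁ c x).deriv, (hasDerivAt_gamma₁ c y).deriv, ← sub_nonneg,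
    gamma₁'_sub_gamma₁']
  have hyx := exp_neg_mul_le_exp_neg_mul hc hxy
  have hx_half := (exp_neg_mul_le_exp_neg_mul hc hx.le).trans hR₀
  exact mul_nonneg_of_nonpos_of_nonpos
    (mul_nonpos_of_nonneg_of_nonpos (by positivity) (by linarith)) (by linarith)

lemma exp_neg_le_half_of_exp_eq_one_add_two_mul {x : ℝ} (hx : 0 < x) (h : exp x = 1 + 2 * x) :
    exp (-x) ≤ 1 / 2 := by
  have hinv : exp (-x) * (1 + 2 * x) = 1 := by rw [← h, ← exp_add]; simp
  have := add_one_le_exp (-x)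
  nlinarith [mul_le_mul_of_nonneg_right this (by linarith : (0:ℝ) ≤ 1 + 2 * x)]

lemma gamma₁_eq_one_add_gamma₁'_mul {c Rs : ℝ} (h : exp (c * Rs) = 1 + 2 * (c * Rs)) :
    gamma₁ c Rs = 1 + gamma₁' c Rs * Rs := by
  have hinv : exp (-(c * Rs)) * (1 + 2 * (c * Rs)) = 1 := by rw [← h, ← exp_add]; simp
  simp only [gamma₁, gamma₁']
  linear_combination (1 - exp (-(c * Rs))) * hinv

lemma min_le_of_hasDerivAt_nonneg_of_nonpos {f f' : ℝ → ℝ} {a m b x : ℝ}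
    (hf : ∀ y, HasDerivAt f (f' y) y) (hf'₁ : ∀ y ∈ Ioo a m, 0 ≤ f' y)
    (hf'₂ : ∀ y ∈ Ioo m b, f' y ≤ 0) (hm : m ∈ Icc a b) (hx : x ∈ Icc a b) :
    min (f a) (f b) ≤ f x := by
  have hcont : Continuous f := continuous_iff_continuousAt.2 fun y => (hf y).continuousAt
  rcases le_total x m with hxm | hmx
  · refine min_le_left _ _ |>.trans <| monotoneOn_of_hasDerivWithinAt_nonneg (convex_Icc a m)
      hcont.continuousOn (fun y _ => (hf y).hasDerivWithinAt) (by simpa using hf'₁)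
      (left_mem_Icc.2 hm.1) ⟨hx.1, hxm⟩ hx.1
  · refine min_le_right _ _ |>.trans <| antitoneOn_of_hasDerivWithinAt_nonpos (convex_Icc m b)
      hcont.continuousOn (fun y _ => (hf y).hasDerivWithinAt) (by simpa using hf'₂)
      ⟨hmx, hx.2⟩ (right_mem_Icc.2 hm.2) hx.2

lemma tangent_le_gamma₁ {c Rs R : ℝ} (hc : 0 < c) (hRs : 0 < Rs)
    (h : exp (c * Rs) = 1 + 2 * (c * Rs)) (hR : R ∈ Icc 0 Rs) :
    1 + gamma₁' c Rs * R ≤ gamma₁ c R := by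
  set t := exp (-(c * Rs))
  have ht : t ≤ 1 / 2 := exp_neg_le_half_of_exp_eq_one_add_two_mul (mul_pos hc hRs) h
  have ht0 : 0 < t := exp_pos _
  -- the derivative of `gamma₁ c - tangent` changes sign where `exp (-(c R)) = 1 - t`
  set R₀ := -log (1 - t) / c
  have hR₀ : exp (-(c * R₀)) = 1 - t := by
    rw [show -(c * R₀) = log (1 - t) by simp only [R₀]; field_simp]; exact exp_log (by linarith)
  have hR₀_mem : R₀ ∈ Icc 0 Rs := by
    constructor
    · exact div_nonneg (neg_nonneg.2 (log_nonpos (by linarith) (by linarith))) hc.le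
    · have : exp (-(c * Rs)) ≤ exp (-(c * R₀)) := by rw [hR₀]; linarith
      nlinarith [exp_le_exp.1 this]
  have hψ : ∀ y, HasDerivAt (fun R => gamma₁ c R - (1 + gamma₁' c Rs * R))
      (gamma₁' c y - gamma₁' c Rs) y := fun y =>
    ((hasDerivAt_gamma₁ c y).sub (((hasDerivAt_id y).const_mul _).const_add 1)).congr_deriv
      (by simp)
  have key := min_le_of_hasDerivAt_nonneg_of_nonpos hψ (a := 0) (m := R₀) (b := Rs)
    (fun y hy => by
      rw [gamma₁'_sub_gamma₁']
      have h₁ := exp_neg_mul_le_exp_neg_mul hc.le hy.2.le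
      have h₂ := exp_neg_mul_le_exp_neg_mul hc.le (hy.2.le.trans hR₀_mem.2)
      rw [hR₀] at h₁
      exact mul_nonneg (mul_nonneg (by positivity) (by linarith)) (by linarith))
    (fun y hy => by
      rw [gamma₁'_sub_gamma₁']
      have h₁ := exp_neg_mul_le_exp_neg_mul hc.le hy.1.le
      have h₂ := exp_neg_mul_le_exp_neg_mul hc.le hy.2.le
      rw [hR₀] at h₁
      exact mul_nonpos_of_nonneg_of_nonpos (mul_nonneg (by positivity) (by linarith))
        (by linarith))
    hR₀_mem hR
  have h₀ : gamma₁ c 0 = 1 := by norm_num [gamma₁]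
  simp only [h₀, gamma₁_eq_one_add_gamma₁'_mul h, mul_zero, add_zero, sub_self, min_self] at key
  linarith

theorem ConvexOn.le_chord_of_le {g : ℝ → ℝ} {s : Set ℝ} {a b x u v : ℝ} (hg : ConvexOn ℝ s g)
    (ha : a ∈ s) (hb : b ∈ s) (hab : a < b) (hx : x ∈ Icc a b) (hu : g a ≤ u) (hv : g b ≤ v) :
    g x ≤ u + (v - u) / (b - a) * (x - a) := by
  have secant : (b - a) * g x ≤ (b - x) * g a + (x - a) * g b := by
    obtain rfl | hax := hx.1.eq_or_lt
    · ring_nf; rfl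
    obtain rfl | hxb := hx.2.eq_or_lt
    · ring_nf; rfl
    exact hg.secant_mono_aux1 ha hb hax hxb
  rw [div_mul_eq_mul_div, ← sub_le_iff_le_add', le_div_iff₀ (sub_pos.2 hab)]
  nlinarith [mul_le_mul_of_nonneg_left hu (sub_nonneg.2 hx.2),
    mul_le_mul_of_nonneg_left hv (sub_nonneg.2 hx.1)]

/-- With `Γ₁(R) = 2·2^{−2R} − 2^{−4R}` and `R* > 0` the solution of `2^{2R*} = 1 + 4 ln(2) R*`,
the function `Γ` equal to the chord `1 − (1 − Γ₁(R*))·R/R*` on `[0, R*)` and to `Γ₁` on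
`[R*, ∞)` is convex on `[0,∞)`, lies below `Γ₁` on `[0,∞)`, and is the largest convex
function below `Γ₁` there (the convex lower envelope). -/
theorem Gamma_convex_envelope (Rs : ℝ) (hRs : 0 < Rs)
    (heq : (2 : ℝ) ^ (2 * Rs) = 1 + 4 * Real.log 2 * Rs)
    (Γ₁ : ℝ → ℝ) (hΓ₁ : ∀ R, Γ₁ R = 2 * (2 : ℝ) ^ (-(2 * R)) - (2 : ℝ) ^ (-(4 * R)))
    (Γ : ℝ → ℝ)
    (hΓ : ∀ R, Γ R = if R < Rs then 1 - (1 - Γ₁ Rs) * R / Rs else Γ₁ R) :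
    ConvexOn ℝ (Set.Ici (0 : ℝ)) Γ ∧
      (∀ R : ℝ, 0 ≤ R → Γ R ≤ Γ₁ R) ∧
      (∀ g : ℝ → ℝ, ConvexOn ℝ (Set.Ici (0 : ℝ)) g → (∀ R : ℝ, 0 ≤ R → g R ≤ Γ₁ R) →
        ∀ R : ℝ, 0 ≤ R → g R ≤ Γ R) := by
  set c := 2 * log 2
  have hc : 0 < c := by positivity
  have hΓ₁c : Γ₁ = gamma₁ c := funext fun R => by rw [hΓ₁, gamma₁_two_mul_log_two]
  have heq' : exp (c * Rs) = 1 + 2 * (c * Rs) := by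
    rw [rpow_def_of_pos two_pos] at heq
    rw [show c * Rs = log 2 * (2 * Rs) by ring, heq]; ring
  have hRs_tangent := gamma₁_eq_one_add_gamma₁'_mul heq'
  have hΓ_lt : ∀ R < Rs, Γ R = 1 + gamma₁' c Rs * R := fun R hR => by
    rw [hΓ, if_pos hR, hΓ₁c, hRs_tangent]; field_simp; ring
  have hΓ_ge : ∀ R, Rs ≤ R → Γ R = Γ₁ R := fun R hR => by rw [hΓ, if_neg hR.not_gt]
  have hconv_Γ₁ := convexOn_gamma₁ hc.le
    (exp_neg_le_half_of_exp_eq_one_add_two_mul (by positivity) heq')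
  have hconv : ConvexOn ℝ univ Γ :=
    (hconv_Γ₁.extend_Iio_tangent (hasDerivAt_gamma₁ c Rs).hasDerivWithinAt).congr fun R _ => by
      dsimp only
      by_cases hR : R < Rs
      · rw [if_pos hR, hΓ_lt R hR, hRs_tangent]; ring
      · rw [if_neg hR, hΓ_ge R (not_lt.1 hR), hΓ₁c]
  refine ⟨hconv.subset (subset_univ _) (convex_Ici 0), fun R hR => ?_, fun g hg hgΓ₁ R hR => ?_⟩
  · rcases lt_or_ge R Rs with hR' | hR'
    · rw [hΓ_lt R hR', hΓ₁c]; exact tangent_le_gamma₁ hc hRs heq' ⟨hR, hR'.le⟩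
    · rw [hΓ_ge R hR']
  · rcases lt_or_ge R Rs with hR' | hR'
    · have hΓ₁0 : Γ₁ 0 = 1 := by norm_num [hΓ₁]
      have := hg.le_chord_of_le self_mem_Ici (mem_Ici.2 hRs.le) hRs ⟨hR, hR'.le⟩
        ((hgΓ₁ 0 le_rfl).trans_eq hΓ₁0) (hgΓ₁ Rs hRs.le)
      rw [hΓ, if_pos hR']
      convert this using 1
      simp only [sub_zero]; field_simp; ring
    · rw [hΓ_ge R hR']; exact hgΓ₁ R hR
end

section
/- Let U, V be independent random vectors in ℝⁿ with E[U U^T] = E[V V^T] = I_n and zero mean. Let Û = E[U|W_U], V̂ = E[V|W_V] for functions W_U of U and W_V of V, and set e_U = U − Û, e_V = V − V̂ with covariance matrices Σ_{e_U} = E[e_U e_Uᵀ], Σ_{e_V} = E[e_V e_Vᵀ]. Then E[(UᵀV − ÛᵀV̂)²] = tr(Σ_{e_V}) + tr(Σ_{e_U}) − tr(Σ_{e_U} Σ_{e_V}). -/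
/-!
Write `e_U = U - Û` and `e_V = V - V̂`, so that `UᵀV - ÛᵀV̂ = e_Uᵀ V + Ûᵀ e_V`. Since `e_U` and
`Û` are functions of `U` while `V` and `e_V` are functions of `V`, independence factors the
expectation of each product `(aᵀb)(cᵀd)` as `tr(E[a cᵀ] E[d bᵀ])`. Orthogonality of the
conditional expectation error, `E[e_U Ûᵀ] = 0`, kills the cross term and gives
`E[Û Ûᵀ] = I - Σ_{e_U}`, leaving `tr Σ_{e_U} + tr((I - Σ_{e_U}) Σ_{e_V})`.
-/

open MeasureTheory ProbabilityTheory Matrix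

section

variable {Ω ι : Type*} {m₁ m₂ m m0 : MeasurableSpace Ω} {μ : Measure Ω}

lemma ProbabilityTheory.Indep.indepFun_of_measurable {β γ : Type*} [MeasurableSpace β]
    [MeasurableSpace γ] {f : Ω → β} {g : Ω → γ} (h : Indep m₁ m₂ μ)
    (hf : Measurable[m₁] f) (hg : Measurable[m₂] g) : IndepFun f g μ :=
  (IndepFun_iff_Indep f g μ).2 (indep_of_indep_of_le h hf.comap_le hg.comap_le)

lemma MeasureTheory.integral_mul_condExp_of_stronglyMeasurable_left (hm : m ≤ m0)
    [SigmaFinite (μ.trim hm)] {f g : Ω → ℝ} (hg : StronglyMeasurable[m] g)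
    (hgf : Integrable (g * f) μ) (hf : Integrable f μ) :
    ∫ ω, g ω * μ[f|m] ω ∂μ = ∫ ω, g ω * f ω ∂μ :=
  calc ∫ ω, g ω * μ[f|m] ω ∂μ = ∫ ω, μ[g * f|m] ω ∂μ :=
        (integral_congr_ae (condExp_mul_of_stronglyMeasurable_left hg hgf hf)).symm
    _ = ∫ ω, g ω * f ω ∂μ := integral_condExp hm

lemma MeasureTheory.condExp_apply_ae_eq [Fintype ι] {X : Ω → ι → ℝ}
    (hX : Integrable X μ) (i : ι) :
    (fun ω => μ[X|m] ω i) =ᵐ[μ] μ[fun ω => X ω i|m] :=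
  (ContinuousLinearMap.proj (R := ℝ) (φ := fun _ : ι => ℝ) i).comp_condExp_comm hX

lemma dotProduct_mul_dotProduct [Fintype ι] {R : Type*} [CommSemiring R] (x y x' y' : ι → R) :
    (x ⬝ᵥ y) * (x' ⬝ᵥ y') = ∑ i, ∑ j, x i * x' j * (y' j * y i) := by
  rw [dotProduct, dotProduct, Finset.sum_mul_sum]
  exact Finset.sum_congr rfl fun i _ => Finset.sum_congr rfl fun j _ => by ring

noncomputable def crossMoment (μ : Measure Ω) (X Y : Ω → ι → ℝ) : Matrix ι ι ℝ :=
  Matrix.of fun i j => ∫ ω, X ω i * Y ω j ∂μ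

variable {X X' Y Y' : Ω → ι → ℝ}

lemma transpose_crossMoment : (crossMoment μ X Y)ᵀ = crossMoment μ Y X := by
  ext i j
  simp only [crossMoment, transpose_apply, of_apply, mul_comm]

lemma ProbabilityTheory.Indep.indepFun_apply_mul_apply (h : Indep m₁ m₂ μ)
    (hX : Measurable[m₁] X) (hX' : Measurable[m₁] X') (hY : Measurable[m₂] Y)
    (hY' : Measurable[m₂] Y') (i j : ι) :
    IndepFun (fun ω => X ω i * X' ω j) (fun ω => Y' ω j * Y ω i) μ :=
  h.indepFun_of_measurable
    (((measurable_pi_apply i).comp hX).mul ((measurable_pi_apply j).comp hX'))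
    (((measurable_pi_apply j).comp hY').mul ((measurable_pi_apply i).comp hY))

variable [Fintype ι]

lemma MeasureTheory.MemLp.integrable_apply_mul_apply (hX : MemLp X 2 μ) (hY : MemLp Y 2 μ)
    (i j : ι) : Integrable (fun ω => X ω i * Y ω j) μ :=
  (hX.eval i).integrable_mul (hY.eval j)

lemma crossMoment_add_left (hX : MemLp X 2 μ) (hX' : MemLp X' 2 μ) (hY : MemLp Y 2 μ) :
    crossMoment μ (X + X') Y = crossMoment μ X Y + crossMoment μ X' Y := by
  ext i j
  simp only [crossMoment, of_apply, Matrix.add_apply, Pi.add_apply, add_mul]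
  exact integral_add (hX.integrable_apply_mul_apply hY i j) (hX'.integrable_apply_mul_apply hY i j)

lemma crossMoment_add_right (hX : MemLp X 2 μ) (hY : MemLp Y 2 μ) (hY' : MemLp Y' 2 μ) :
    crossMoment μ X (Y + Y') = crossMoment μ X Y + crossMoment μ X Y' := by
  ext i j
  simp only [crossMoment, of_apply, Matrix.add_apply, Pi.add_apply, mul_add]
  exact integral_add (hX.integrable_apply_mul_apply hY i j) (hX.integrable_apply_mul_apply hY' i j)

lemma crossMoment_sub_condExp_condExp [IsFiniteMeasure μ] (hm : m ≤ m0)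
    (hX : MemLp X 2 μ) : crossMoment μ (X - μ[X|m]) μ[X|m] = 0 := by
  have hXc : MemLp μ[X|m] 2 μ := hX.condExp one_le_two
  ext i j
  simp only [crossMoment, of_apply, Pi.sub_apply, Matrix.zero_apply]
  have horth : ∫ ω, μ[X|m] ω j * μ[X|m] ω i ∂μ = ∫ ω, μ[X|m] ω j * X ω i ∂μ := by
    rw [← integral_mul_condExp_of_stronglyMeasurable_left hm
      ((continuous_apply j).comp_stronglyMeasurable stronglyMeasurable_condExp)
      (hXc.integrable_apply_mul_apply hX j i) ((hX.eval i).integrable one_le_two)]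
    refine integral_congr_ae ?_
    filter_upwards [condExp_apply_ae_eq (m := m) (hX.integrable one_le_two) i] with ω hω
    rw [hω]
  calc ∫ ω, (X ω i - μ[X|m] ω i) * μ[X|m] ω j ∂μ
      = ∫ ω, μ[X|m] ω j * X ω i ∂μ - ∫ ω, μ[X|m] ω j * μ[X|m] ω i ∂μ := by
        rw [← integral_sub (hXc.integrable_apply_mul_apply hX j i)
          (hXc.integrable_apply_mul_apply hXc j i)]
        exact integral_congr_ae (ae_of_all _ fun ω => by ring)
    _ = 0 := by rw [horth, sub_self]

lemma crossMoment_condExp_condExp [IsFiniteMeasure μ] (hm : m ≤ m0) (hX : MemLp X 2 μ) :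
    crossMoment μ μ[X|m] μ[X|m]
      = crossMoment μ X X - crossMoment μ (X - μ[X|m]) (X - μ[X|m]) := by
  have horth := crossMoment_sub_condExp_condExp hm hX
  have horth' : crossMoment μ μ[X|m] (X - μ[X|m]) = 0 := by
    rw [← transpose_crossMoment, horth, transpose_zero]
  have hXc : MemLp μ[X|m] 2 μ := hX.condExp one_le_two
  have he : MemLp (X - μ[X|m]) 2 μ := hX.sub hXc
  set Xc := μ[X|m]
  set e := X - Xc
  have hXe : X = Xc + e := (add_sub_cancel Xc X).symm
  rw [hXe, crossMoment_add_left hXc he (hXc.add he), crossMoment_add_right hXc hXc he,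
    crossMoment_add_right he hXc he, horth, horth']
  abel

lemma ProbabilityTheory.Indep.integrable_dotProduct_mul_dotProduct (h : Indep m₁ m₂ μ)
    (hX : Measurable[m₁] X) (hX' : Measurable[m₁] X') (hY : Measurable[m₂] Y)
    (hY' : Measurable[m₂] Y') (hXL : MemLp X 2 μ) (hX'L : MemLp X' 2 μ) (hYL : MemLp Y 2 μ)
    (hY'L : MemLp Y' 2 μ) :
    Integrable (fun ω => (X ω ⬝ᵥ Y ω) * (X' ω ⬝ᵥ Y' ω)) μ := by
  simp only [dotProduct_mul_dotProduct]
  exact integrable_finsetSum _ fun i _ => integrable_finsetSum _ fun j _ =>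
    (h.indepFun_apply_mul_apply hX hX' hY hY' i j).integrable_mul
      (hXL.integrable_apply_mul_apply hX'L i j) (hY'L.integrable_apply_mul_apply hYL j i)

lemma ProbabilityTheory.Indep.integral_dotProduct_mul_dotProduct (h : Indep m₁ m₂ μ)
    (hX : Measurable[m₁] X) (hX' : Measurable[m₁] X') (hY : Measurable[m₂] Y)
    (hY' : Measurable[m₂] Y') (hXL : MemLp X 2 μ) (hX'L : MemLp X' 2 μ) (hYL : MemLp Y 2 μ)
    (hY'L : MemLp Y' 2 μ) :
    ∫ ω, (X ω ⬝ᵥ Y ω) * (X' ω ⬝ᵥ Y' ω) ∂μ = trace (crossMoment μ X X' * crossMoment μ Y' Y) := by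
  have hind := h.indepFun_apply_mul_apply hX hX' hY hY'
  have hint i j : Integrable (fun ω => X ω i * X' ω j * (Y' ω j * Y ω i)) μ :=
    (hind i j).integrable_mul (hXL.integrable_apply_mul_apply hX'L i j)
      (hY'L.integrable_apply_mul_apply hYL j i)
  simp only [dotProduct_mul_dotProduct]
  rw [integral_finsetSum _ fun i _ => integrable_finsetSum _ fun j _ => hint i j]
  refine Finset.sum_congr rfl fun i _ => ?_
  rw [integral_finsetSum _ fun j _ => hint i j]
  exact Finset.sum_congr rfl fun j _ => (hind i j).integral_mul_eq_mul_integral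
    (hXL.integrable_apply_mul_apply hX'L i j).aestronglyMeasurable
    (hY'L.integrable_apply_mul_apply hYL j i).aestronglyMeasurable

theorem ProbabilityTheory.Indep.integral_sq_dotProduct_sub_dotProduct_condExp
    [IsFiniteMeasure μ] {mX mY : MeasurableSpace Ω} (h : Indep m₁ m₂ μ) (hmX : mX ≤ m0)
    (hmX₁ : mX ≤ m₁) (hmY₂ : mY ≤ m₂) (hX : Measurable[m₁] X) (hY : Measurable[m₂] Y)
    (hXL : MemLp X 2 μ) (hYL : MemLp Y 2 μ) :
    ∫ ω, (X ω ⬝ᵥ Y ω - μ[X|mX] ω ⬝ᵥ μ[Y|mY] ω) ^ 2 ∂μ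
      = trace (crossMoment μ (X - μ[X|mX]) (X - μ[X|mX]) * crossMoment μ Y Y)
        + trace ((crossMoment μ X X - crossMoment μ (X - μ[X|mX]) (X - μ[X|mX]))
          * crossMoment μ (Y - μ[Y|mY]) (Y - μ[Y|mY])) := by
  have hXc : Measurable[m₁] μ[X|mX] := stronglyMeasurable_condExp.measurable.mono hmX₁ le_rfl
  have hYc : Measurable[m₂] μ[Y|mY] := stronglyMeasurable_condExp.measurable.mono hmY₂ le_rfl
  have hXcL : MemLp μ[X|mX] 2 μ := hXL.condExp one_le_two
  have hYcL : MemLp μ[Y|mY] 2 μ := hYL.condExp one_le_two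
  rw [← crossMoment_condExp_condExp hmX hXL]
  set Xc := μ[X|mX]
  set Yc := μ[Y|mY]
  have hsplit : ∀ ω, (X ω ⬝ᵥ Y ω - Xc ω ⬝ᵥ Yc ω) ^ 2
      = ((X - Xc) ω ⬝ᵥ Y ω) * ((X - Xc) ω ⬝ᵥ Y ω)
        + 2 * (((X - Xc) ω ⬝ᵥ Y ω) * (Xc ω ⬝ᵥ (Y - Yc) ω))
        + (Xc ω ⬝ᵥ (Y - Yc) ω) * (Xc ω ⬝ᵥ (Y - Yc) ω) := fun ω => by
    simp only [Pi.sub_apply, sub_dotProduct, dotProduct_sub]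
    ring
  have heX := hX.sub hXc
  have heY := hY.sub hYc
  have heXL := hXL.sub hXcL
  have heYL := hYL.sub hYcL
  have hint₁ := h.integrable_dotProduct_mul_dotProduct heX heX hY hY heXL heXL hYL hYL
  have hint₂ := h.integrable_dotProduct_mul_dotProduct heX hXc hY heY heXL hXcL hYL heYL
  have hint₃ := h.integrable_dotProduct_mul_dotProduct hXc hXc heY heY hXcL hXcL heYL heYL
  rw [integral_congr_ae (ae_of_all _ hsplit),
    integral_add (hint₁.fun_add (hint₂.const_mul 2)) hint₃,
    integral_add hint₁ (hint₂.const_mul 2),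
    integral_const_mul, h.integral_dotProduct_mul_dotProduct heX heX hY hY heXL heXL hYL hYL,
    h.integral_dotProduct_mul_dotProduct heX hXc hY heY heXL hXcL hYL heYL,
    h.integral_dotProduct_mul_dotProduct hXc hXc heY heY hXcL hXcL heYL heYL,
    crossMoment_sub_condExp_condExp hmX hXL, zero_mul, trace_zero, mul_zero, add_zero]

end

theorem mse_inner_product_error_expression_general
    {Ω : Type*} [MeasurableSpace Ω] (μ : Measure Ω) [IsProbabilityMeasure μ]
    {n : ℕ} {α β : Type*} [MeasurableSpace α] [MeasurableSpace β]
    (U V : Ω → (Fin n → ℝ)) (hU : Measurable U)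
    (hUL2 : MemLp U 2 μ) (hVL2 : MemLp V 2 μ)
    (hUcov : ∀ i j, ∫ ω, U ω i * U ω j ∂μ = if i = j then 1 else 0)
    (hVcov : ∀ i j, ∫ ω, V ω i * V ω j ∂μ = if i = j then 1 else 0)
    (hindep : IndepFun U V μ)
    (f₁ : (Fin n → ℝ) → α) (f₂ : (Fin n → ℝ) → β)
    (hf₁ : Measurable f₁) (hf₂ : Measurable f₂)
    (Uhat Vhat : Ω → (Fin n → ℝ))
    (hUhat : Uhat = μ[U | MeasurableSpace.comap (fun ω => f₁ (U ω)) inferInstance])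
    (hVhat : Vhat = μ[V | MeasurableSpace.comap (fun ω => f₂ (V ω)) inferInstance])
    (SigU SigV : Matrix (Fin n) (Fin n) ℝ)
    (hSigU : ∀ i j, SigU i j = ∫ ω, (U ω i - Uhat ω i) * (U ω j - Uhat ω j) ∂μ)
    (hSigV : ∀ i j, SigV i j = ∫ ω, (V ω i - Vhat ω i) * (V ω j - Vhat ω j) ∂μ) :
    ∫ ω, (U ω ⬝ᵥ V ω - Uhat ω ⬝ᵥ Vhat ω) ^ 2 ∂μ
      = Matrix.trace SigV + Matrix.trace SigU - Matrix.trace (SigU * SigV) := by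
  have hUU : crossMoment μ U U = 1 := by
    ext i j; simp only [crossMoment, of_apply, hUcov, one_apply]
  have hVV : crossMoment μ V V = 1 := by
    ext i j; simp only [crossMoment, of_apply, hVcov, one_apply]
  have hSU : crossMoment μ (U - Uhat) (U - Uhat) = SigU := by ext i j; exact (hSigU i j).symm
  have hSV : crossMoment μ (V - Vhat) (V - Vhat) = SigV := by ext i j; exact (hSigV i j).symm
  have key := ((IndepFun_iff_Indep U V μ).1 hindep).integral_sq_dotProduct_sub_dotProduct_condExp
    (mX := MeasurableSpace.comap (fun ω => f₁ (U ω)) inferInstance)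
    (mY := MeasurableSpace.comap (fun ω => f₂ (V ω)) inferInstance)
    (hf₁.comp hU).comap_le (hf₁.comp (comap_measurable U)).comap_le
    (hf₂.comp (comap_measurable V)).comap_le (comap_measurable U) (comap_measurable V) hUL2 hVL2
  rw [← hUhat, ← hVhat, hUU, hVV, hSU, hSV] at key
  rw [key, mul_one, sub_mul, one_mul, trace_sub]
  ring

/-- Error expression for quantized inner products: for independent zero-mean,
identity-covariance random vectors `U, V` in `ℝⁿ`, with `Û = E[U|W_U]`, `V̂ = E[V|W_V]`,
error covariances `Σ_{e_U}, Σ_{e_V}`, one has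
`E[(UᵀV − ÛᵀV̂)²] = tr Σ_{e_V} + tr Σ_{e_U} − tr(Σ_{e_U} Σ_{e_V})`. -/
theorem mse_inner_product_error_expression
    {Ω : Type*} [MeasurableSpace Ω] (μ : Measure Ω) [IsProbabilityMeasure μ]
    {n : ℕ} {α β : Type*} [MeasurableSpace α] [MeasurableSpace β]
    (U V : Ω → (Fin n → ℝ)) (hU : Measurable U) (hV : Measurable V)
    (hUL2 : MemLp U 2 μ) (hVL2 : MemLp V 2 μ)
    (hU0 : ∫ ω, U ω ∂μ = 0) (hV0 : ∫ ω, V ω ∂μ = 0)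
    (hUcov : ∀ i j, ∫ ω, U ω i * U ω j ∂μ = if i = j then 1 else 0)
    (hVcov : ∀ i j, ∫ ω, V ω i * V ω j ∂μ = if i = j then 1 else 0)
    (hindep : IndepFun U V μ)
    (f₁ : (Fin n → ℝ) → α) (f₂ : (Fin n → ℝ) → β)
    (hf₁ : Measurable f₁) (hf₂ : Measurable f₂)
    (Uhat Vhat : Ω → (Fin n → ℝ))
    (hUhat : Uhat = μ[U | MeasurableSpace.comap (fun ω => f₁ (U ω)) inferInstance])
    (hVhat : Vhat = μ[V | MeasurableSpace.comap (fun ω => f₂ (V ω)) inferInstance])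
    (SigU SigV : Matrix (Fin n) (Fin n) ℝ)
    (hSigU : ∀ i j, SigU i j = ∫ ω, (U ω i - Uhat ω i) * (U ω j - Uhat ω j) ∂μ)
    (hSigV : ∀ i j, SigV i j = ∫ ω, (V ω i - Vhat ω i) * (V ω j - Vhat ω j) ∂μ) :
    ∫ ω, (U ω ⬝ᵥ V ω - Uhat ω ⬝ᵥ Vhat ω) ^ 2 ∂μ
      = Matrix.trace SigV + Matrix.trace SigU - Matrix.trace (SigU * SigV) :=
  mse_inner_product_error_expression_general μ U V hU hUL2 hVL2 hUcov hVcov hindep f₁ f₂ hf₁ hf₂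
    Uhat Vhat hUhat hVhat SigU SigV hSigU hSigV
end

section
/- Let λ₁,…,λ_d > 0 with (1/d)·Σᵢ λᵢ = σ², let L = maxᵢ λᵢ, and suppose (1/d)·Σᵢ ln λᵢ ≥ ln σ² − ln(1+δ) for some δ ≥ 0. Then (1/d)·Σᵢ λᵢ² ≤ σ⁴ + 2·L²·ln(1+δ). -/
/-!
On `(0, L]` the function `t ↦ log t + t² / (2L²)` is concave, since its derivative
`1/t + t/L²` is antitone there. Comparing it with its tangent line at `σ²` gives, for every
`λ ∈ (0, L]`, `log λ ≤ log σ² + (λ - σ²)/σ² - (λ - σ²)² / (2L²)`. Averaging over the `λᵢ`, the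
linear term vanishes and the quadratic one is the variance `(1/d)·Σ λᵢ² - σ⁴`, so the
log-flatness hypothesis bounds the variance by `2L²·ln(1+δ)`.
-/

open Real Set Finset

theorem ConcaveOn.le_add_mul_sub_of_hasDerivAt {S : Set ℝ} {f : ℝ → ℝ} {f' x y : ℝ}
    (hf : ConcaveOn ℝ S f) (hx : x ∈ S) (hy : y ∈ S) (hf' : HasDerivAt f f' x) :
    f y ≤ f x + f' * (y - x) := by
  rcases lt_trichotomy x y with hxy | rfl | hyx
  · have h := hf.slope_le_of_hasDerivAt hx hy hxy hf'
    rw [slope_def_field, div_le_iff₀ (sub_pos.2 hxy)] at h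
    linarith
  · simp
  · have h := hf.le_slope_of_hasDerivAt hy hx hyx hf'
    rw [slope_def_field, le_div_iff₀ (sub_pos.2 hyx)] at h
    linarith

theorem antitoneOn_inv_add_div_sq (L : ℝ) :
    AntitoneOn (fun t : ℝ => t⁻¹ + t / L ^ 2) (Ioc 0 L) := by
  rintro a ⟨ha, haL⟩ b ⟨hb, hbL⟩ hab
  have hab_le : a * b ≤ L ^ 2 := by nlinarith
  have h : (b - a) / L ^ 2 ≤ (b - a) / (a * b) :=
    div_le_div_of_nonneg_left (sub_nonneg.2 hab) (by positivity) hab_le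
  have hinv : (b - a) / (a * b) = a⁻¹ - b⁻¹ := by field_simp
  rw [hinv, sub_div] at h
  dsimp only
  linarith

theorem hasDerivAt_log_add_sq_div {t : ℝ} (ht : t ≠ 0) (L : ℝ) :
    HasDerivAt (fun t => log t + t ^ 2 / (2 * L ^ 2)) (t⁻¹ + t / L ^ 2) t :=
  ((hasDerivAt_log ht).add ((hasDerivAt_pow 2 t).div_const (2 * L ^ 2))).congr_deriv (by ring)

theorem concaveOn_log_add_sq_div (L : ℝ) :
    ConcaveOn ℝ (Ioc 0 L) (fun t => log t + t ^ 2 / (2 * L ^ 2)) := by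
  have hderiv : ∀ t ∈ Ioc (0 : ℝ) L,
      HasDerivAt (fun t => log t + t ^ 2 / (2 * L ^ 2)) (t⁻¹ + t / L ^ 2) t :=
    fun t ht => hasDerivAt_log_add_sq_div ht.1.ne' L
  refine AntitoneOn.concaveOn_of_deriv (convex_Ioc 0 L)
    (fun t ht => (hderiv t ht).continuousAt.continuousWithinAt) ?_ ?_ <;> rw [interior_Ioc]
  · exact fun t ht => (hderiv t (Ioo_subset_Ioc_self ht)).differentiableAt.differentiableWithinAt
  · exact ((antitoneOn_inv_add_div_sq L).mono Ioo_subset_Ioc_self).congr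
      fun t ht => (hderiv t (Ioo_subset_Ioc_self ht)).deriv.symm

theorem log_le_log_add_sub_div_sub_sq {L s x : ℝ} (hs : s ∈ Ioc 0 L) (hx : x ∈ Ioc 0 L) :
    log x ≤ log s + (x - s) / s - (x - s) ^ 2 / (2 * L ^ 2) := by
  have h := (concaveOn_log_add_sq_div L).le_add_mul_sub_of_hasDerivAt hs hx
    (hasDerivAt_log_add_sq_div hs.1.ne' L)
  have hs0 : s ≠ 0 := hs.1.ne'
  calc log x ≤ log s + s ^ 2 / (2 * L ^ 2) + (s⁻¹ + s / L ^ 2) * (x - s) - x ^ 2 / (2 * L ^ 2) := by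
        linarith
    _ = log s + (x - s) / s - (x - s) ^ 2 / (2 * L ^ 2) := by field_simp; ring

theorem sum_sq_sub_eq {ι : Type*} [Fintype ι] {lam : ι → ℝ} {s : ℝ}
    (hsum : ∑ i, lam i = Fintype.card ι * s) :
    ∑ i, (lam i - s) ^ 2 = ∑ i, lam i ^ 2 - Fintype.card ι * s ^ 2 := by
  simp only [sub_sq, sum_add_distrib, sum_sub_distrib, ← sum_mul, ← mul_sum, hsum, sum_const,
    card_univ, nsmul_eq_mul]
  ring

theorem sum_sq_sub_le_of_mem_Ioc {ι : Type*} [Fintype ι] {lam : ι → ℝ} {s L : ℝ}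
    (hlam : ∀ i, lam i ∈ Ioc 0 L) (hs : s ∈ Ioc 0 L) (hsum : ∑ i, lam i = Fintype.card ι * s) :
    ∑ i, (lam i - s) ^ 2 ≤ 2 * L ^ 2 * (Fintype.card ι * log s - ∑ i, log (lam i)) := by
  have hL2 : 0 < 2 * L ^ 2 := by have := hs.1.trans_le hs.2; positivity
  have hlinear : ∑ i, (lam i - s) / s = 0 := by
    rw [← sum_div, sum_sub_distrib, hsum]
    simp
  have hpointwise := sum_le_sum fun i (_ : i ∈ Finset.univ) =>
    log_le_log_add_sub_div_sub_sq hs (hlam i)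
  rw [sum_sub_distrib, sum_add_distrib, hlinear, ← sum_div] at hpointwise
  simp only [sum_const, card_univ, nsmul_eq_mul] at hpointwise
  rw [← div_le_iff₀' hL2]
  linarith

theorem spectral_flatness_general (d : ℕ)
    (lam : Fin d → ℝ) (hpos : ∀ i, 0 < lam i)
    (sigma2 L delta : ℝ)
    (havg : (1 / (d : ℝ)) * ∑ i, lam i = sigma2)
    (hL : IsGreatest (Set.range lam) L)
    (hln : Real.log sigma2 - Real.log (1 + delta) ≤ (1 / (d : ℝ)) * ∑ i, Real.log (lam i)) :
    (1 / (d : ℝ)) * ∑ i, (lam i) ^ 2 ≤ sigma2 ^ 2 + 2 * L ^ 2 * Real.log (1 + delta) := by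
  obtain ⟨⟨i₀, -⟩, hmax⟩ := hL
  have hd : (0 : ℝ) < d := Nat.cast_pos.2 i₀.pos
  have hle : ∀ i, lam i ≤ L := fun i => hmax ⟨i, rfl⟩
  have hsum : ∑ i, lam i = d * sigma2 := by rw [← havg]; field_simp
  have hsigma : sigma2 ∈ Ioc 0 L := by
    refine ⟨?_, ?_⟩
    · rw [← havg]
      have := sum_pos (fun i _ => hpos i) ⟨i₀, mem_univ i₀⟩
      positivity
    · have := sum_le_sum fun i (_ : i ∈ Finset.univ) => hle i
      simp only [sum_const, card_univ, Fintype.card_fin, nsmul_eq_mul, hsum] at this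
      exact le_of_mul_le_mul_left this hd
  have hvar := sum_sq_sub_le_of_mem_Ioc (fun i => ⟨hpos i, hle i⟩) hsigma
    (by rwa [Fintype.card_fin])
  rw [sum_sq_sub_eq (by rwa [Fintype.card_fin]), Fintype.card_fin] at hvar
  rw [div_mul_eq_mul_div, one_mul, le_div_iff₀ hd] at hln
  rw [div_mul_eq_mul_div, one_mul, div_le_iff₀ hd]
  linarith [mul_le_mul_of_nonneg_left hln (by positivity : (0 : ℝ) ≤ 2 * L ^ 2)]

/-- Spectral-flatness inequality: if `λ₁,…,λ_d > 0` with average `σ²`, `L = maxᵢ λᵢ`, and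
`(1/d)·Σᵢ ln λᵢ ≥ ln σ² − ln(1+δ)` for some `δ ≥ 0`, then
`(1/d)·Σᵢ λᵢ² ≤ σ⁴ + 2·L²·ln(1+δ)`. -/
theorem spectral_flatness (d : ℕ) (hd : 0 < d)
    (lam : Fin d → ℝ) (hpos : ∀ i, 0 < lam i)
    (sigma2 L delta : ℝ) (hdelta : 0 ≤ delta)
    (havg : (1 / (d : ℝ)) * ∑ i, lam i = sigma2)
    (hL : IsGreatest (Set.range lam) L)
    (hln : Real.log sigma2 - Real.log (1 + delta) ≤ (1 / (d : ℝ)) * ∑ i, Real.log (lam i)) :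
    (1 / (d : ℝ)) * ∑ i, (lam i) ^ 2 ≤ sigma2 ^ 2 + 2 * L ^ 2 * Real.log (1 + delta) :=
  spectral_flatness_general d lam hpos sigma2 L delta havg hL hln
end

section
/- Let (U, Z) be the first two columns (scaled by √n) of a Haar-uniform orthogonal matrix in ℝ^{n×n}, so U, Z are each uniform on √n·S^{n−1} and UᵀZ = 0 almost surely. Then E[U₁² Z₁²] = n/(n+2) and for 1 ≤ d ≤ n, E[(U_{[d]}ᵀ Z_{[d]})²] = d·n·(n−d)/((n+2)(n−1)). -/
/-!
Let `M` have the law of `S` and fix columns `k ≠ l`. Left multiplication by permutation matrices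
makes the rows exchangeable, so `E[M i k * M i l * M j k * M j l]` equals
`ξ = E[(M k k * M k l)²]` for `i = j` and `η = E[M k k * M k l * M l k * M l l]` otherwise; the
square of the partial inner product of the two columns over `d` rows then has mean
`d ξ + d (d - 1) η`. With `m = E[(M k k * M l l)²]`, three linear relations pin down `ξ` and `η`:
expanding `‖col k‖² ‖col l‖² = 1` gives `n ξ + n (n - 1) m = 1`, expanding `⟪col k, col l⟫² = 0`
gives `n ξ + n (n - 1) η = 0`, and invariance under the Householder reflections through
`e k ± 2 e l` gives `ξ = m + 2 η`. Hence `ξ = 1 / (n (n + 2))` and `η = -1 / (n (n + 2) (n - 1))`.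
-/

open MeasureTheory Matrix Finset

namespace Matrix

variable {m R : Type*} [Fintype m] [DecidableEq m] [Field R]

def householder (w : m → R) : Matrix m m R := 1 - (2 / (w ⬝ᵥ w)) • vecMulVec w w

theorem householder_transpose_mul_self {w : m → R} (hw : w ⬝ᵥ w ≠ 0) :
    (householder w)ᵀ * householder w = 1 := by
  have hcoef : 2 / (w ⬝ᵥ w) * (2 / (w ⬝ᵥ w)) * (w ⬝ᵥ w) = 2 / (w ⬝ᵥ w) + 2 / (w ⬝ᵥ w) := by
    field_simp; ring
  simp only [householder, transpose_sub, transpose_one, transpose_smul, transpose_vecMulVec,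
    sub_mul, mul_sub, one_mul, mul_one, smul_mul_smul_comm, vecMulVec_mul_vecMulVec,
    vecMulVec_smul, smul_smul, hcoef, add_smul]
  abel

theorem householder_mul_apply (w : m → R) (M : Matrix m m R) (i j : m) :
    (householder w * M) i j = M i j - 2 / (w ⬝ᵥ w) * w i * (w ᵥ* M) j := by
  simp [householder, sub_mul, vecMulVec_mul, vecMulVec_apply, mul_assoc]

theorem permMatrix_transpose_mul_self (σ : Equiv.Perm m) :
    (σ.permMatrix R)ᵀ * σ.permMatrix R = 1 := by
  rw [transpose_permMatrix, ← permMatrix_mul, mul_inv_cancel, permMatrix_one]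

end Matrix

theorem Equiv.Perm.exists_apply_eq_and_apply_eq {α : Type*} [DecidableEq α] {a b c d : α}
    (hab : a ≠ b) (hcd : c ≠ d) : ∃ σ : Equiv.Perm α, σ a = c ∧ σ b = d := by
  refine ⟨(swap a c).trans (swap (swap a c b) d), ?_, by simp⟩
  rw [trans_apply, swap_apply_left]
  refine swap_apply_of_ne_of_ne ?_ hcd
  exact fun h => hab ((swap a c).injective ((swap_apply_left a c).trans h))

theorem Finset.sum_sum_ite_eq_card {ι R : Type*} [DecidableEq ι] [CommRing R] (F : Finset ι)
    (a b : R) :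
    ∑ i ∈ F, ∑ j ∈ F, (if i = j then a else b) = #F * a + #F * (#F - 1) * b := by
  have hrow : ∀ i ∈ F, ∑ j ∈ F, (if i = j then a else b) = a - b + #F * b := by
    intro i hi
    calc ∑ j ∈ F, (if i = j then a else b) = ∑ j ∈ F, ((if i = j then a - b else 0) + b) :=
          sum_congr rfl fun j _ => by split_ifs <;> ring
      _ = a - b + #F * b := by
          rw [sum_add_distrib, sum_ite_eq, if_pos hi, sum_const, nsmul_eq_mul]
  rw [sum_congr rfl hrow, sum_const, nsmul_eq_mul]
  ring

theorem integral_sum_sum_of_integral_eq_ite {X ι : Type*} [MeasurableSpace X] {ν : Measure X}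
    [DecidableEq ι] {f : ι → ι → X → ℝ} (hf : ∀ i j, Integrable (f i j) ν) {a b : ℝ}
    (hab : ∀ i j, ∫ x, f i j x ∂ν = if i = j then a else b) (F : Finset ι) :
    ∫ x, ∑ i ∈ F, ∑ j ∈ F, f i j x ∂ν = #F * a + #F * (#F - 1) * b := by
  rw [integral_finsetSum _ fun i _ => integrable_finsetSum _ fun j _ => hf i j]
  simp_rw [integral_finsetSum _ fun j _ => hf _ j, hab]
  exact sum_sum_ite_eq_card F a b

section OrthogonalLaw

variable {n : ℕ} {ν : Measure (Fin n → Fin n → ℝ)}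

def IsLeftOrthInvariant (ν : Measure (Fin n → Fin n → ℝ)) : Prop :=
  ∀ Q : Matrix (Fin n) (Fin n) ℝ, Qᵀ * Q = 1 → ν.map (fun M => of.symm (Q * of M)) = ν

theorem ae_sum_mul_columns_eq_ite (horth : ∀ᵐ M ∂ν, (of M)ᵀ * of M = 1) :
    ∀ᵐ M ∂ν, ∀ k l, ∑ i, M i k * M i l = if k = l then 1 else 0 := by
  filter_upwards [horth] with M h k l
  simpa [mul_apply, one_apply] using congrFun₂ h k l

theorem ae_norm_le_one (horth : ∀ᵐ M ∂ν, (of M)ᵀ * of M = 1) : ∀ᵐ M ∂ν, ‖M‖ ≤ 1 := by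
  filter_upwards [ae_sum_mul_columns_eq_ite horth] with M h
  refine (pi_norm_le_iff_of_nonneg zero_le_one).2 fun i =>
    (pi_norm_le_iff_of_nonneg zero_le_one).2 fun j => ?_
  rw [Real.norm_eq_abs, abs_le_one_iff_mul_self_le_one]
  calc M i j * M i j ≤ ∑ i, M i j * M i j :=
        single_le_sum (f := fun i => M i j * M i j) (fun k _ => mul_self_nonneg _) (mem_univ i)
    _ = 1 := by simpa using h j j

theorem integrable_of_continuous [IsFiniteMeasure ν] (horth : ∀ᵐ M ∂ν, (of M)ᵀ * of M = 1)
    {g : (Fin n → Fin n → ℝ) → ℝ} (hg : Continuous g) : Integrable g ν := by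
  obtain ⟨C, hC⟩ := (isCompact_closedBall (0 : Fin n → Fin n → ℝ) 1).exists_bound_of_continuousOn
    hg.continuousOn
  refine Integrable.of_bound hg.aestronglyMeasurable C ?_
  filter_upwards [ae_norm_le_one horth] with M hM
  exact hC _ (mem_closedBall_zero_iff.2 hM)

theorem continuous_of_symm_mul_of (Q : Matrix (Fin n) (Fin n) ℝ) :
    Continuous fun M : Fin n → Fin n → ℝ => of.symm (Q * of M) :=
  continuous_const.matrix_mul continuous_id

theorem integral_comp_mul_left (hinv : IsLeftOrthInvariant ν) {Q : Matrix (Fin n) (Fin n) ℝ}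
    (hQ : Qᵀ * Q = 1) {g : (Fin n → Fin n → ℝ) → ℝ} (hg : Measurable g) :
    ∫ M, g (of.symm (Q * of M)) ∂ν = ∫ M, g M ∂ν := by
  rw [← integral_map (continuous_of_symm_mul_of Q).aemeasurable hg.aestronglyMeasurable, hinv Q hQ]

theorem integral_comp_perm_rows (hinv : IsLeftOrthInvariant ν) (σ : Equiv.Perm (Fin n))
    {g : (Fin n → Fin n → ℝ) → ℝ} (hg : Measurable g) :
    ∫ M, g (fun i => M (σ i)) ∂ν = ∫ M, g M ∂ν := by
  simpa [PEquiv.toMatrix_toPEquiv_mul, submatrix] using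
    integral_comp_mul_left hinv (permMatrix_transpose_mul_self σ) hg

variable {k l : Fin n}

theorem integral_rows_eq_ite (hinv : IsLeftOrthInvariant ν) (hkl : k ≠ l)
    {f : (Fin n → ℝ) → (Fin n → ℝ) → ℝ} (hf : Measurable (Function.uncurry f)) (i j : Fin n) :
    ∫ M, f (M i) (M j) ∂ν = if i = j then ∫ M, f (M k) (M k) ∂ν else ∫ M, f (M k) (M l) ∂ν := by
  split_ifs with hij
  · subst hij
    simpa using integral_comp_perm_rows hinv (Equiv.swap k i)
      (hf.comp ((measurable_pi_apply k).prodMk (measurable_pi_apply k)))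
  · obtain ⟨σ, hk, hl⟩ := Equiv.Perm.exists_apply_eq_and_apply_eq hkl hij
    simpa [hk, hl] using integral_comp_perm_rows hinv σ
      (hf.comp ((measurable_pi_apply k).prodMk (measurable_pi_apply l)))

-- Row `k` of `householder (e k + t e l) * M`.
theorem integral_comp_reflect_row (hinv : IsLeftOrthInvariant ν) (hkl : k ≠ l) (t : ℝ)
    {f : (Fin n → ℝ) → ℝ} (hf : Measurable f) :
    ∫ M, f (fun j => ((t ^ 2 - 1) * M k j - 2 * t * M l j) / (1 + t ^ 2)) ∂ν = ∫ M, f (M k) ∂ν := by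
  set w : Fin n → ℝ := Pi.single k 1 + Pi.single l t
  have hww : w ⬝ᵥ w = 1 + t ^ 2 := by
    simp [w, dotProduct, Pi.single_apply, add_mul, mul_add, sum_add_distrib, hkl, hkl.symm]
    ring
  have hrow (M : Fin n → Fin n → ℝ) : of.symm (householder w * of M) k =
      fun j => ((t ^ 2 - 1) * M k j - 2 * t * M l j) / (1 + t ^ 2) := by
    funext j
    rw [of_symm_apply, householder_mul_apply, hww]
    simp [w, vecMul, dotProduct, Pi.single_apply, add_mul, sum_add_distrib, hkl]
    field_simp
    ring
  have := integral_comp_mul_left hinv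
    (householder_transpose_mul_self (by rw [hww]; positivity)) (hf.comp (measurable_pi_apply k))
  simp only [Function.comp_apply, hrow] at this
  exact this

variable [IsProbabilityMeasure ν]

theorem moment_identity_of_unit_columns (horth : ∀ᵐ M ∂ν, (of M)ᵀ * of M = 1)
    (hinv : IsLeftOrthInvariant ν) (hkl : k ≠ l) :
    n * ∫ M, M k k * M k l * (M k k * M k l) ∂ν
      + n * (n - 1) * ∫ M, M k k * M l l * (M k k * M l l) ∂ν = 1 := by
  have hprod : ∀ᵐ M ∂ν, ∑ i, ∑ j, M i k * M j l * (M i k * M j l) = 1 := by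
    filter_upwards [ae_sum_mul_columns_eq_ite horth] with M h
    calc ∑ i, ∑ j, M i k * M j l * (M i k * M j l)
        = (∑ i, M i k * M i k) * ∑ j, M j l * M j l := by
          rw [sum_mul_sum]; congr! 2; ring
      _ = 1 := by simp [h]
  have := integral_sum_sum_of_integral_eq_ite
    (fun i j => integrable_of_continuous horth (by fun_prop))
    (integral_rows_eq_ite hinv hkl (f := fun r s => r k * s l * (r k * s l)) (by fun_prop)) univ
  rw [integral_congr_ae hprod] at this
  simpa using this.symm

theorem moment_identity_of_orthogonal_columns (horth : ∀ᵐ M ∂ν, (of M)ᵀ * of M = 1)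
    (hinv : IsLeftOrthInvariant ν) (hkl : k ≠ l) :
    n * ∫ M, M k k * M k l * (M k k * M k l) ∂ν
      + n * (n - 1) * ∫ M, M k k * M k l * (M l k * M l l) ∂ν = 0 := by
  have hprod : ∀ᵐ M ∂ν, ∑ i, ∑ j, M i k * M i l * (M j k * M j l) = 0 := by
    filter_upwards [ae_sum_mul_columns_eq_ite horth] with M h
    rw [← sum_mul_sum, h k l, if_neg hkl, zero_mul]
  have := integral_sum_sum_of_integral_eq_ite
    (fun i j => integrable_of_continuous horth (by fun_prop))
    (integral_rows_eq_ite hinv hkl (f := fun r s => r k * r l * (s k * s l)) (by fun_prop)) univ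
  rw [integral_congr_ae hprod] at this
  simpa using this.symm

theorem moment_identity_of_reflection (horth : ∀ᵐ M ∂ν, (of M)ᵀ * of M = 1)
    (hinv : IsLeftOrthInvariant ν) (hkl : k ≠ l) :
    ∫ M, M k k * M k l * (M k k * M k l) ∂ν =
      ∫ M, M k k * M l l * (M k k * M l l) ∂ν + 2 * ∫ M, M k k * M k l * (M l k * M l l) ∂ν := by
  have hrefl (t : ℝ) : ∫ M, ((t ^ 2 - 1) * M k k - 2 * t * M l k) *
      ((t ^ 2 - 1) * M k l - 2 * t * M l l) * (((t ^ 2 - 1) * M k k - 2 * t * M l k) *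
      ((t ^ 2 - 1) * M k l - 2 * t * M l l)) ∂ν =
      (1 + t ^ 2) ^ 4 * ∫ M, M k k * M k l * (M k k * M k l) ∂ν := by
    rw [← integral_comp_reflect_row hinv hkl t (f := fun r => r k * r l * (r k * r l))
      (by fun_prop), ← integral_const_mul]
    refine integral_congr_ae (ae_of_all _ fun M => ?_)
    field_simp
  have hT := integral_rows_eq_ite hinv hkl (ν := ν)
    (f := fun r s => r k * r l * (s k * s l)) (by fun_prop)
  have hV := integral_rows_eq_ite hinv hkl (ν := ν)
    (f := fun r s => r k * s l * (r k * s l)) (by fun_prop)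
  -- The terms odd in row `l` cancel between `t = 2` and `t = -2`.
  have hexpand : ∫ M, (3 * M k k - 4 * M l k) * (3 * M k l - 4 * M l l) *
        ((3 * M k k - 4 * M l k) * (3 * M k l - 4 * M l l))
      + (3 * M k k + 4 * M l k) * (3 * M k l + 4 * M l l) *
        ((3 * M k k + 4 * M l k) * (3 * M k l + 4 * M l l)) ∂ν
      = ∫ M, 2 * (81 * (M k k * M k l * (M k k * M k l))
        + 144 * (M k k * M l l * (M k k * M l l))
        + 144 * (M l k * M k l * (M l k * M k l))
        + 256 * (M l k * M l l * (M l k * M l l))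
        + 576 * (M k k * M k l * (M l k * M l l))) ∂ν :=
    integral_congr_ae (ae_of_all _ fun M => by ring)
  have h₁ := hrefl 2
  have h₂ := hrefl (-2)
  norm_num at h₁ h₂
  rw [integral_add, integral_const_mul, integral_add, integral_add, integral_add, integral_add]
    at hexpand
  · simp only [integral_const_mul, h₁, h₂, hT l l, hV l k, if_pos, if_neg hkl.symm] at hexpand
    linarith
  all_goals exact integrable_of_continuous horth (by fun_prop)

theorem integral_mul_rows_eq_ite (horth : ∀ᵐ M ∂ν, (of M)ᵀ * of M = 1)
    (hinv : IsLeftOrthInvariant ν) (hkl : k ≠ l) (i j : Fin n) :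
    ∫ M, M i k * M i l * (M j k * M j l) ∂ν =
      if i = j then 1 / (n * (n + 2) : ℝ) else -1 / (n * (n + 2) * (n - 1) : ℝ) := by
  have hn : (1 : ℝ) < n := by exact_mod_cast Fin.nontrivial_iff_two_le.1 ⟨k, l, hkl⟩
  have h₁ := moment_identity_of_unit_columns horth hinv hkl
  have h₀ := moment_identity_of_orthogonal_columns horth hinv hkl
  have hr := moment_identity_of_reflection horth hinv hkl
  rw [integral_rows_eq_ite hinv hkl (f := fun r s => r k * r l * (s k * s l)) (by fun_prop) i j]
  set ξ := ∫ M, M k k * M k l * (M k k * M k l) ∂ν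
  set η := ∫ M, M k k * M k l * (M l k * M l l) ∂ν
  have hξ : ξ * (n * (n + 2)) = 1 := by
    linear_combination h₁ + n * (n - 1) * hr + 2 * h₀
  split_ifs
  · field_simp
    linear_combination hξ
  · have : (n : ℝ) - 1 ≠ 0 := by linarith
    field_simp
    linear_combination (n + 2) * h₀ - hξ

theorem integral_sq_sum_mul_columns (horth : ∀ᵐ M ∂ν, (of M)ᵀ * of M = 1)
    (hinv : IsLeftOrthInvariant ν) (hkl : k ≠ l) (F : Finset (Fin n)) :
    ∫ M, (∑ i ∈ F, M i k * M i l) ^ 2 ∂ν = #F * (n - #F) / (n * (n + 2) * (n - 1)) := by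
  have hn : (1 : ℝ) < n := by exact_mod_cast Fin.nontrivial_iff_two_le.1 ⟨k, l, hkl⟩
  have : (n : ℝ) - 1 ≠ 0 := by linarith
  simp_rw [sq, sum_mul_sum]
  rw [integral_sum_sum_of_integral_eq_ite (fun i j => integrable_of_continuous horth (by fun_prop))
    (integral_mul_rows_eq_ite horth hinv hkl)]
  field_simp
  ring

end OrthogonalLaw

/-- Let `S` be a Haar-uniform random orthogonal matrix in `ℝ^{n×n}` (its law is invariant
under left multiplication by any fixed orthogonal matrix), and let `U = √n·S₁`,
`Z = √n·S₂` be its first two scaled columns, so `U, Z` are uniform on `√n·S^{n−1}` with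
`UᵀZ = 0` a.s. Then `E[U₁² Z₁²] = n/(n+2)` and, for `1 ≤ d ≤ n`,
`E[(U_{[d]}ᵀ Z_{[d]})²] = d·n·(n−d)/((n+2)(n−1))`. -/
theorem orthogonal_columns_projected_correlation
    {Ω : Type*} [MeasurableSpace Ω] (μ : Measure Ω) [IsProbabilityMeasure μ]
    (n : ℕ) (hn : 2 ≤ n) (d : ℕ) (hdn : d ≤ n)
    (S : Ω → (Fin n → Fin n → ℝ)) (hS : Measurable S)
    (horth : ∀ᵐ ω ∂μ, (Matrix.of (S ω))ᵀ * Matrix.of (S ω) = 1)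
    (hinv : ∀ Q : Matrix (Fin n) (Fin n) ℝ, Qᵀ * Q = 1 →
      Measure.map (fun ω => Matrix.of.symm (Q * Matrix.of (S ω))) μ = Measure.map S μ)
    (U Z : Ω → (Fin n → ℝ))
    (hU : ∀ ω i, U ω i = Real.sqrt n * S ω i ⟨0, by omega⟩)
    (hZ : ∀ ω i, Z ω i = Real.sqrt n * S ω i ⟨1, by omega⟩) :
    (∫ ω, (U ω ⟨0, by omega⟩) ^ 2 * (Z ω ⟨0, by omega⟩) ^ 2 ∂μ = (n : ℝ) / (n + 2)) ∧
      ∫ ω, (∑ i ∈ Finset.univ.filter (fun i : Fin n => (i : ℕ) < d), U ω i * Z ω i) ^ 2 ∂μ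
        = (d : ℝ) * n * ((n : ℝ) - d) / (((n : ℝ) + 2) * ((n : ℝ) - 1)) := by
  have hkl : (⟨0, by omega⟩ : Fin n) ≠ ⟨1, by omega⟩ := by simp
  have hν : IsProbabilityMeasure (μ.map S) := Measure.isProbabilityMeasure_map hS.aemeasurable
  have horth' : ∀ᵐ M ∂(μ.map S), (of M)ᵀ * of M = 1 :=
    (ae_map_iff hS.aemeasurable (isClosed_eq (by fun_prop) continuous_const).measurableSet).2 horth
  have hinv' : IsLeftOrthInvariant (μ.map S) := fun Q hQ =>
    (Measure.map_map (continuous_of_symm_mul_of Q).measurable hS).trans (hinv Q hQ)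
  have hn1 : (n : ℝ) - 1 ≠ 0 := by
    have : (2 : ℝ) ≤ n := by exact_mod_cast hn
    linarith
  have key (F : Finset (Fin n)) : ∫ ω, (∑ i ∈ F, U ω i * Z ω i) ^ 2 ∂μ =
      n ^ 2 * (#F * (n - #F) / (n * (n + 2) * (n - 1))) := by
    rw [← integral_sq_sum_mul_columns horth' hinv' hkl F, ← integral_const_mul,
      integral_map hS.aemeasurable (by fun_prop : Continuous _).aestronglyMeasurable]
    congr with ω
    simp_rw [hU, hZ, mul_mul_mul_comm, Real.mul_self_sqrt (Nat.cast_nonneg n), ← mul_sum, mul_pow]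
  constructor
  · have h := key {⟨0, by omega⟩}
    simp only [sum_singleton, card_singleton, mul_pow] at h
    rw [h]
    field_simp
    ring
  · rw [key, Fin.card_filter_val_lt, min_eq_right hdn]
    field_simp
end

section
/- Let U be uniform on √n·S^{n−1} ⊂ ℝⁿ and U_{[d]} its projection to the first d coordinates, 1 ≤ d ≤ n. Then for any 0 < ε < 1, Pr(‖U_{[d]}‖² > (1+ε)d) ≤ 2·exp(−(ε/(1+ε))²·d/24) ≤ 2·exp(−ε²·d/96). -/
/-!
Write `X₁ = ∑_{i<d} Zᵢ²` and `S = ∑ᵢ Zᵢ²`, so that `‖U_{[d]}‖² = n X₁ / S`. With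
`a = ε / (2 + ε)`, chosen so that `(1 + ε)(1 - a) = 1 + a`, the event forces `X₁ ≥ (1 + a) d` or
`S ≤ (1 - a) n`. Both are chi-squared tail events, bounded by the Chernoff method through
`𝔼 exp (t Z²) = (1 - 2t)^{-1/2}`; the optimised exponents are controlled by
`1 + a ≤ exp (a - a²/3)` and `1 - a ≤ exp (-a - a²/2)`, and `2a ≥ ε / (1 + ε)` turns `a²/6` into
the stated `(ε / (1 + ε))² / 24`.
-/

open MeasureTheory ProbabilityTheory Real

lemma gaussianPDFReal_zero_one_mul_exp_mul_sq (t x : ℝ) :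
    gaussianPDFReal 0 1 x * exp (t * x ^ 2) = (√(2 * π))⁻¹ * exp (-(1 / 2 - t) * x ^ 2) := by
  rw [gaussianPDFReal, NNReal.coe_one, mul_one, mul_assoc, ← exp_add]
  ring_nf

lemma integrable_exp_mul_sq_gaussianReal {t : ℝ} (ht : t < 1 / 2) :
    Integrable (fun x ↦ exp (t * x ^ 2)) (gaussianReal 0 1) := by
  rw [gaussianReal_of_var_ne_zero _ one_ne_zero,
    integrable_withDensity_iff_integrable_smul' (measurable_gaussianPDF 0 1)
      (ae_of_all _ fun _ ↦ gaussianPDF_lt_top)]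
  simp_rw [toReal_gaussianPDF, smul_eq_mul, gaussianPDFReal_zero_one_mul_exp_mul_sq]
  exact (integrable_exp_neg_mul_sq (by linarith)).const_mul _

-- For `1 / 2 ≤ t` both sides are `0`: the integrand is not integrable and `√` vanishes on `(-∞, 0]`.
lemma integral_exp_mul_sq_gaussianReal (t : ℝ) :
    ∫ x, exp (t * x ^ 2) ∂gaussianReal 0 1 = (√(1 - 2 * t))⁻¹ := by
  simp_rw [integral_gaussianReal_eq_integral_smul one_ne_zero, smul_eq_mul,
    gaussianPDFReal_zero_one_mul_exp_mul_sq, integral_const_mul, integral_gaussian]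
  rw [← sqrt_inv, ← sqrt_inv, ← sqrt_mul (by positivity)]
  congr 1
  field_simp

lemma one_add_le_exp_sub_sq_div_three {a : ℝ} (ha₀ : 0 ≤ a) (ha : a ≤ 1 / 3) :
    1 + a ≤ exp (a - a ^ 2 / 3) := by
  have h := quadratic_le_exp_of_nonneg (x := a - a ^ 2 / 3) (by nlinarith)
  nlinarith [pow_nonneg ha₀ 3, pow_nonneg ha₀ 4]

lemma one_sub_le_exp_neg_sub_sq_div_two {a : ℝ} (ha₀ : 0 ≤ a) (ha : a < 1) :
    1 - a ≤ exp (-a - a ^ 2 / 2) := by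
  have hsum := hasSum_pow_div_log_of_abs_lt_one (x := a) (by rwa [abs_of_nonneg ha₀])
  have hle : a + a ^ 2 / 2 ≤ -log (1 - a) := by
    have := sum_le_hasSum (Finset.range 2) (fun i _ ↦ by positivity) hsum
    norm_num [Finset.sum_range_succ] at this
    linarith
  calc 1 - a = exp (log (1 - a)) := (exp_log (by linarith)).symm
    _ ≤ exp (-a - a ^ 2 / 2) := exp_le_exp.mpr (by linarith)

section ChiSquared

variable {ι Ω : Type*} [MeasurableSpace Ω] {μ : Measure Ω} {X : ι → Ω → ℝ} {t : ℝ}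

lemma mgf_sq_of_map_eq_gaussianReal {Y : Ω → ℝ} (hY : AEMeasurable Y μ)
    (hlaw : μ.map Y = gaussianReal 0 1) (t : ℝ) :
    mgf (fun ω ↦ Y ω ^ 2) μ t = (√(1 - 2 * t))⁻¹ := by
  rw [mgf, ← integral_exp_mul_sq_gaussianReal t, ← hlaw, integral_map hY (by fun_prop)]

lemma integrable_exp_mul_sq_of_map_eq_gaussianReal {Y : Ω → ℝ} (hY : AEMeasurable Y μ)
    (hlaw : μ.map Y = gaussianReal 0 1) (ht : t < 1 / 2) :
    Integrable (fun ω ↦ exp (t * Y ω ^ 2)) μ := by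
  have h := integrable_exp_mul_sq_gaussianReal ht
  rw [← hlaw] at h
  exact h.comp_aemeasurable hY

lemma ProbabilityTheory.iIndepFun.sq (hindep : iIndepFun X μ) :
    iIndepFun (fun i ω ↦ X i ω ^ 2) μ :=
  hindep.comp (fun _ x ↦ x ^ 2) fun _ ↦ measurable_id.pow_const 2

lemma mgf_sum_sq_of_gaussian (hX : ∀ i, Measurable (X i)) (hindep : iIndepFun X μ)
    (hlaw : ∀ i, μ.map (X i) = gaussianReal 0 1) (s : Finset ι) (t : ℝ) :
    mgf (∑ i ∈ s, fun ω ↦ X i ω ^ 2) μ t = (√(1 - 2 * t))⁻¹ ^ s.card := by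
  rw [hindep.sq.mgf_sum (fun i ↦ (hX i).pow_const 2),
    Finset.prod_congr rfl fun i _ ↦ mgf_sq_of_map_eq_gaussianReal (hX i).aemeasurable (hlaw i) t,
    Finset.prod_const]

lemma integrable_exp_mul_sum_sq_of_gaussian (hX : ∀ i, Measurable (X i))
    (hindep : iIndepFun X μ) (hlaw : ∀ i, μ.map (X i) = gaussianReal 0 1) (s : Finset ι)
    (ht : t < 1 / 2) :
    Integrable (fun ω ↦ exp (t * (∑ i ∈ s, fun ω ↦ X i ω ^ 2) ω)) μ :=
  have := hindep.isProbabilityMeasure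
  hindep.sq.integrable_exp_mul_sum (fun i ↦ (hX i).pow_const 2)
    fun i _ ↦ integrable_exp_mul_sq_of_map_eq_gaussianReal (hX i).aemeasurable (hlaw i) ht

lemma measure_sum_sq_ge_le_of_gaussian (hX : ∀ i, Measurable (X i)) (hindep : iIndepFun X μ)
    (hlaw : ∀ i, μ.map (X i) = gaussianReal 0 1) (s : Finset ι) (c : ℝ)
    (ht₀ : 0 ≤ t) (ht : t < 1 / 2) :
    μ.real {ω | c ≤ ∑ i ∈ s, X i ω ^ 2} ≤ exp (-t * c) * (√(1 - 2 * t))⁻¹ ^ s.card := by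
  have := hindep.isProbabilityMeasure
  have h := measure_ge_le_exp_mul_mgf c ht₀
    (integrable_exp_mul_sum_sq_of_gaussian hX hindep hlaw s ht)
  simpa only [mgf_sum_sq_of_gaussian hX hindep hlaw, Finset.sum_apply] using h

lemma measure_sum_sq_le_le_of_gaussian (hX : ∀ i, Measurable (X i)) (hindep : iIndepFun X μ)
    (hlaw : ∀ i, μ.map (X i) = gaussianReal 0 1) (s : Finset ι) (c : ℝ) (ht : t ≤ 0) :
    μ.real {ω | ∑ i ∈ s, X i ω ^ 2 ≤ c} ≤ exp (-t * c) * (√(1 - 2 * t))⁻¹ ^ s.card := by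
  have := hindep.isProbabilityMeasure
  have h := measure_le_le_exp_mul_mgf c ht
    (integrable_exp_mul_sum_sq_of_gaussian hX hindep hlaw s (ht.trans_lt (by norm_num)))
  simpa only [mgf_sum_sq_of_gaussian hX hindep hlaw, Finset.sum_apply] using h

lemma chiSquared_upper_tail (hX : ∀ i, Measurable (X i)) (hindep : iIndepFun X μ)
    (hlaw : ∀ i, μ.map (X i) = gaussianReal 0 1) (s : Finset ι) {a : ℝ} (ha₀ : 0 ≤ a)
    (ha : a ≤ 1 / 3) :
    μ.real {ω | (1 + a) * s.card ≤ ∑ i ∈ s, X i ω ^ 2} ≤ exp (-(a ^ 2 * s.card / 6)) := by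
  set t := a / (2 * (1 + a)) with ht_def
  have ht : 1 - 2 * t = (1 + a)⁻¹ := by rw [ht_def]; field_simp; ring
  calc _ ≤ exp (-t * ((1 + a) * s.card)) * (√(1 - 2 * t))⁻¹ ^ s.card :=
        measure_sum_sq_ge_le_of_gaussian hX hindep hlaw s _ (by positivity)
          (by rw [ht_def, div_lt_iff₀ (by positivity)]; linarith)
    _ = exp (-(a * s.card / 2)) * √(1 + a) ^ s.card := by
        rw [ht, sqrt_inv, inv_inv, ht_def]; congr 2; field_simp
    _ ≤ exp (-(a * s.card / 2)) * exp ((a - a ^ 2 / 3) / 2) ^ s.card := by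
        gcongr
        rw [exp_half]
        exact sqrt_le_sqrt (one_add_le_exp_sub_sq_div_three ha₀ ha)
    _ = exp (-(a ^ 2 * s.card / 6)) := by
        rw [← exp_nat_mul, ← exp_add]; congr 1; ring

lemma chiSquared_lower_tail (hX : ∀ i, Measurable (X i)) (hindep : iIndepFun X μ)
    (hlaw : ∀ i, μ.map (X i) = gaussianReal 0 1) (s : Finset ι) {a : ℝ} (ha₀ : 0 ≤ a)
    (ha : a < 1) :
    μ.real {ω | ∑ i ∈ s, X i ω ^ 2 ≤ (1 - a) * s.card} ≤ exp (-(a ^ 2 * s.card / 4)) := by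
  have ha₁ : 1 - a ≠ 0 := by linarith
  set t := -(a / (2 * (1 - a))) with ht_def
  have ht : 1 - 2 * t = (1 - a)⁻¹ := by rw [ht_def]; field_simp; ring
  calc _ ≤ exp (-t * ((1 - a) * s.card)) * (√(1 - 2 * t))⁻¹ ^ s.card :=
        measure_sum_sq_le_le_of_gaussian hX hindep hlaw s _
          (neg_nonpos.mpr (div_nonneg ha₀ (by linarith)))
    _ = exp (a * s.card / 2) * √(1 - a) ^ s.card := by
        rw [ht, sqrt_inv, inv_inv, ht_def]; congr 2; field_simp
    _ ≤ exp (a * s.card / 2) * exp ((-a - a ^ 2 / 2) / 2) ^ s.card := by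
        gcongr
        rw [exp_half]
        exact sqrt_le_sqrt (one_sub_le_exp_neg_sub_sq_div_two ha₀ ha)
    _ = exp (-(a ^ 2 * s.card / 4)) := by
        rw [← exp_nat_mul, ← exp_add]; congr 1; ring

end ChiSquared

lemma sum_sq_mul_div_sqrt_sum_sq {ι : Type*} [Fintype ι] (s : Finset ι) {c : ℝ} (hc : 0 ≤ c)
    (z : ι → ℝ) :
    ∑ i ∈ s, (√c * z i / √(∑ j, z j ^ 2)) ^ 2 = c * (∑ i ∈ s, z i ^ 2) / ∑ j, z j ^ 2 := by
  simp_rw [div_pow, mul_pow, sq_sqrt hc, sq_sqrt (Finset.sum_nonneg fun j _ ↦ sq_nonneg (z j)),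
    ← Finset.sum_div, ← Finset.mul_sum]

lemma mul_div_le_of_lt_of_lt {a ε n d x S : ℝ} (ha : a ≤ 1) (hε : 0 ≤ ε)
    (hn : 0 ≤ n) (hd : 0 ≤ d) (haε : (1 + ε) * (1 - a) = 1 + a)
    (hx : x < (1 + a) * d) (hS : (1 - a) * n < S) :
    n * x / S ≤ (1 + ε) * d := by
  have hS₀ : 0 < S := lt_of_le_of_lt (by nlinarith) hS
  rw [div_le_iff₀ hS₀]
  calc n * x ≤ n * ((1 + a) * d) := by gcongr
    _ = (1 + ε) * d * ((1 - a) * n) := by rw [← haε]; ring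
    _ ≤ (1 + ε) * d * S := by gcongr

lemma exp_neg_sq_div_two_add_le {ε d : ℝ} (hε : 0 ≤ ε) (hd : 0 ≤ d) :
    exp (-((ε / (2 + ε)) ^ 2 * d / 6)) ≤ exp (-(ε / (1 + ε)) ^ 2 * d / 24) := by
  have hle : ε / (1 + ε) ≤ 2 * (ε / (2 + ε)) := by
    rw [← mul_div_assoc, div_le_div_iff₀ (by positivity) (by positivity)]
    nlinarith
  have hsq := pow_le_pow_left₀ (by positivity) hle 2
  gcongr exp ?_
  nlinarith [mul_le_mul_of_nonneg_right hsq hd]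

lemma exp_neg_sq_div_one_add_le {ε d : ℝ} (hε₀ : 0 ≤ ε) (hε₁ : ε ≤ 1) (hd : 0 ≤ d) :
    exp (-(ε / (1 + ε)) ^ 2 * d / 24) ≤ exp (-ε ^ 2 * d / 96) := by
  have hle : ε / 2 ≤ ε / (1 + ε) := div_le_div_of_nonneg_left hε₀ (by linarith) (by linarith)
  have hsq := pow_le_pow_left₀ (by positivity) hle 2
  gcongr exp ?_
  nlinarith [mul_le_mul_of_nonneg_right hsq hd]

lemma measure_le_ofReal_two_mul_of_subset_union {Ω : Type*} [MeasurableSpace Ω] {μ : Measure Ω}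
    [IsFiniteMeasure μ] {E A B : Set Ω} {b : ℝ} (hE : E ⊆ A ∪ B) (hA : μ.real A ≤ b)
    (hB : μ.real B ≤ b) :
    μ E ≤ ENNReal.ofReal (2 * b) := by
  have hb : 0 ≤ b := measureReal_nonneg.trans hA
  rw [ENNReal.le_ofReal_iff_toReal_le (measure_ne_top _ _) (by positivity), ← measureReal_def]
  calc μ.real E ≤ μ.real (A ∪ B) := measureReal_mono hE
    _ ≤ μ.real A + μ.real B := measureReal_union_le _ _
    _ ≤ 2 * b := by linarith

theorem sphere_projection_tail_bound_general
    {Ω : Type*} [MeasurableSpace Ω] (μ : Measure Ω) [IsProbabilityMeasure μ]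
    (n d : ℕ) (hdn : d ≤ n)
    (Z : Ω → (Fin n → ℝ)) (hZ : Measurable Z)
    (hgauss : ∀ i, Measure.map (fun ω => Z ω i) μ = gaussianReal 0 1)
    (hiid : iIndepFun (fun i ω => Z ω i) μ)
    (U : Ω → (Fin n → ℝ))
    (hU : ∀ ω i, U ω i = Real.sqrt n * Z ω i / Real.sqrt (∑ j, (Z ω j) ^ 2))
    (ε : ℝ) (hε0 : 0 < ε) (hε1 : ε < 1) :
    μ {ω | (1 + ε) * d < ∑ i ∈ Finset.univ.filter (fun i : Fin n => (i : ℕ) < d), (U ω i) ^ 2}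
        ≤ ENNReal.ofReal (2 * Real.exp (-(ε / (1 + ε)) ^ 2 * d / 24)) ∧
      2 * Real.exp (-(ε / (1 + ε)) ^ 2 * d / 24) ≤ 2 * Real.exp (-ε ^ 2 * d / 96) := by
  refine ⟨?_, by gcongr 2 * ?_; exact exp_neg_sq_div_one_add_le hε0.le hε1.le d.cast_nonneg⟩
  set s := Finset.univ.filter (fun i : Fin n => (i : ℕ) < d)
  have hs : s.card = d := by rw [Fin.card_filter_val_lt, min_eq_right hdn]
  have hZi : ∀ i, Measurable (fun ω ↦ Z ω i) := fun i ↦ (measurable_pi_apply i).comp hZ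
  set a := ε / (2 + ε) with ha_def
  have ha₀ : 0 ≤ a := by positivity
  have ha : a ≤ 1 / 3 := by rw [div_le_iff₀ (by positivity)]; linarith
  have haε : (1 + ε) * (1 - a) = 1 + a := by rw [ha_def]; field_simp; ring
  have hsub : {ω | (1 + ε) * d < ∑ i ∈ s, U ω i ^ 2} ⊆
      {ω | (1 + a) * d ≤ ∑ i ∈ s, Z ω i ^ 2} ∪ {ω | ∑ i, Z ω i ^ 2 ≤ (1 - a) * n} := by
    intro ω hω
    by_contra hω'
    simp only [Set.mem_union, Set.mem_ofPred_eq, not_or, not_le] at hω hω'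
    simp only [hU, sum_sq_mul_div_sqrt_sum_sq s n.cast_nonneg] at hω
    exact hω.not_ge (mul_div_le_of_lt_of_lt (by linarith) hε0.le n.cast_nonneg d.cast_nonneg
      haε hω'.1 hω'.2)
  have hA := chiSquared_upper_tail hZi hiid hgauss s ha₀ ha
  have hB := chiSquared_lower_tail hZi hiid hgauss Finset.univ ha₀ (by linarith)
  rw [hs] at hA
  rw [Finset.card_univ, Fintype.card_fin] at hB
  have hnd : exp (-(a ^ 2 * n / 4)) ≤ exp (-(a ^ 2 * d / 6)) := by
    have hdn' : (d : ℝ) ≤ n := by exact_mod_cast hdn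
    gcongr exp ?_
    nlinarith [sq_nonneg a, d.cast_nonneg (α := ℝ)]
  have hexp := exp_neg_sq_div_two_add_le hε0.le (d.cast_nonneg (α := ℝ))
  exact measure_le_ofReal_two_mul_of_subset_union hsub (hA.trans hexp) (hB.trans (hnd.trans hexp))

/-- Tail bound for the projected sphere vector: if `U = √n·Z/‖Z‖` is uniform on
`√n·S^{n−1}` and `U_{[d]}` is its projection to the first `d` coordinates, then for
`0 < ε < 1`, `Pr(‖U_{[d]}‖² > (1+ε)d) ≤ 2·exp(−(ε/(1+ε))²·d/24) ≤ 2·exp(−ε²·d/96)`. -/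
theorem sphere_projection_tail_bound
    {Ω : Type*} [MeasurableSpace Ω] (μ : Measure Ω) [IsProbabilityMeasure μ]
    (n d : ℕ) (hd1 : 1 ≤ d) (hdn : d ≤ n)
    (Z : Ω → (Fin n → ℝ)) (hZ : Measurable Z)
    (hgauss : ∀ i, Measure.map (fun ω => Z ω i) μ = gaussianReal 0 1)
    (hiid : iIndepFun (fun i ω => Z ω i) μ)
    (U : Ω → (Fin n → ℝ))
    (hU : ∀ ω i, U ω i = Real.sqrt n * Z ω i / Real.sqrt (∑ j, (Z ω j) ^ 2))
    (ε : ℝ) (hε0 : 0 < ε) (hε1 : ε < 1) :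
    μ {ω | (1 + ε) * d < ∑ i ∈ Finset.univ.filter (fun i : Fin n => (i : ℕ) < d), (U ω i) ^ 2}
        ≤ ENNReal.ofReal (2 * Real.exp (-(ε / (1 + ε)) ^ 2 * d / 24)) ∧
      2 * Real.exp (-(ε / (1 + ε)) ^ 2 * d / 24) ≤ 2 * Real.exp (-ε ^ 2 * d / 96) :=
  sphere_projection_tail_bound_general μ n d hdn Z hZ hgauss hiid U hU ε hε0 hε1
end
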